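/- Let G be a starlike graph with clique partition (V_0, V_1, …, V_t) and let S ⊆ V(G). If no vertex of S − Z is adjacent to any vertex of S ∩ Z, then S is m-convexly independent. -/

import Mathlib

open SimpleGraph

variable {V : Type*}

/-- The closed neighborhood of a vertex. -/
def closedNbhd (G : SimpleGraph V) (v : V) : Set V := insert v (G.neighborSet v)

/-- A vertex is simplicial if its closed neighborhood induces a complete graph. -/
def IsSimplicial (G : SimpleGraph V) (v : V) : Prop :=
  ∀ a ∈ closedNbhd G v, ∀ b ∈ closedNbhd G v, a ≠ b → G.Adj a b

/-- `Z`, the set of simplicial vertices of `G`. -/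
def simplicialSet (G : SimpleGraph V) : Set V := {v | IsSimplicial G v}

/-- `N(T)`, the union of open neighborhoods of vertices of `T`. -/
def nbhdSet (G : SimpleGraph V) (T : Set V) : Set V := ⋃ v ∈ T, G.neighborSet v

/-- An independent set of vertices. -/
def IsIndepSet' (G : SimpleGraph V) (T : Set V) : Prop :=
  ∀ u ∈ T, ∀ v ∈ T, ¬ G.Adj u v

/-- The difference `d(T) = |T| - |N(T)|` of a set of vertices. -/
noncomputable def indepDiff (G : SimpleGraph V) (T : Set V) : ℤ :=
  (T.ncard : ℤ) - ((nbhdSet G T).ncard : ℤ)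

/-- The critical independence difference `d_c(G)`. -/
noncomputable def critIndepDiff (G : SimpleGraph V) : ℤ :=
  sSup {d : ℤ | ∃ T : Set V, IsIndepSet' G T ∧ d = indepDiff G T}

/-- A walk is an induced path if it is a path and no two non-consecutive vertices
of it are adjacent. -/
def IsInducedPath (G : SimpleGraph V) {a b : V} (p : G.Walk a b) : Prop :=
  p.IsPath ∧ ∀ (i j : ℕ) (hi : i < p.support.length) (hj : j < p.support.length),
    i + 1 < j → ¬ G.Adj (p.support.get ⟨i, hi⟩) (p.support.get ⟨j, hj⟩)

/-- A set is monophonically convex if it contains every vertex of every induced path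
joining two of its vertices. -/
def MonoConvex (G : SimpleGraph V) (S : Set V) : Prop :=
  ∀ ⦃a b : V⦄, a ∈ S → b ∈ S → ∀ p : G.Walk a b, IsInducedPath G p →
    ∀ w ∈ p.support, w ∈ S

/-- The monophonic convex hull of `S`: the smallest monophonically convex set containing `S`. -/
def monoHull (G : SimpleGraph V) (S : Set V) : Set V :=
  ⋂₀ {T : Set V | S ⊆ T ∧ MonoConvex G T}

/-- A set is monophonically convexly independent if no member is in the hull
of the others. -/
def MConvexIndep (G : SimpleGraph V) (S : Set V) : Prop :=
  ∀ v ∈ S, v ∉ monoHull G (S \ {v})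

/-- The monophonic rank: the largest size of an m-convexly independent set. -/
noncomputable def monoRank (G : SimpleGraph V) : ℕ :=
  sSup {n : ℕ | ∃ S : Set V, MConvexIndep G S ∧ n = S.ncard}

/-- A starlike partition of a graph: a partition of the vertex set into cliques
`V_0, V_1, …, V_t` such that `V_0` is a maximal clique and, for `i ≥ 1`,
all vertices of `V_i` have the same closed neighborhood outside `V_i`,
contained in `V_0`. -/
structure IsStarlikePartition (G : SimpleGraph V) (t : ℕ) (Vp : Fin (t+1) → Set V) : Prop where
  nonempty : ∀ i, (Vp i).Nonempty
  disjoint : ∀ i j, i ≠ j → Disjoint (Vp i) (Vp j)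
  covers : ∀ v : V, ∃ i, v ∈ Vp i
  cliques : ∀ i, G.IsClique (Vp i)
  maximal : ∀ T : Set V, G.IsClique T → Vp 0 ⊆ T → T ⊆ Vp 0
  nbhd_eq : ∀ i : Fin (t+1), i ≠ 0 → ∀ u ∈ Vp i, ∀ v ∈ Vp i,
    closedNbhd G u \ Vp i = closedNbhd G v \ Vp i
  nbhd_sub : ∀ i : Fin (t+1), i ≠ 0 → ∀ u ∈ Vp i, closedNbhd G u \ Vp i ⊆ Vp 0

/-- `X_i`: the maximal clique containing `V_i` (`X_0 = V_0`; for `i ≥ 1` it is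
the closed neighborhood of any vertex of `V_i`). -/
def Xset (G : SimpleGraph V) {t : ℕ} (Vp : Fin (t+1) → Set V) (i : Fin (t+1)) : Set V :=
  if i = 0 then Vp 0 else ⋃ u ∈ Vp i, closedNbhd G u

/-- `C_i = X_i ∩ Z`. -/
def Cset (G : SimpleGraph V) {t : ℕ} (Vp : Fin (t+1) → Set V) (i : Fin (t+1)) : Set V :=
  Xset G Vp i ∩ simplicialSet G

/-- `C'_i = X_i − C_i`. -/
def Cset' (G : SimpleGraph V) {t : ℕ} (Vp : Fin (t+1) → Set V) (i : Fin (t+1)) : Set V :=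
  Xset G Vp i \ Cset G Vp i

/-- `Y_i`: the union of the sets `C_j`, over `j ≠ i` with `C'_j ⊆ C'_i`. -/
def Yset (G : SimpleGraph V) {t : ℕ} (Vp : Fin (t+1) → Set V) (i : Fin (t+1)) : Set V :=
  ⋃ j ∈ {j : Fin (t+1) | j ≠ i ∧ Cset' G Vp j ⊆ Cset' G Vp i}, Cset G Vp j

open scoped Classical in
/-- The vertex set of the split graph `G_i`: if `|N(Y_i) − Y_i| = |C'_i| − 1` and
`|Y_i| ≥ |C'_i| − 1` then `(C'_i − {x}) ∪ Y_i` where `{x} = C'_i − N(Y_i)`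
(so that `C'_i − {x} = C'_i ∩ N(Y_i)`), otherwise `C'_i ∪ Y_i`. -/
noncomputable def Wset (G : SimpleGraph V) {t : ℕ} (Vp : Fin (t+1) → Set V)
    (i : Fin (t+1)) : Set V :=
  if (((nbhdSet G (Yset G Vp i) \ Yset G Vp i).ncard : ℤ) = ((Cset' G Vp i).ncard : ℤ) - 1
      ∧ ((Yset G Vp i).ncard : ℤ) ≥ ((Cset' G Vp i).ncard : ℤ) - 1)
  then (Cset' G Vp i ∩ nbhdSet G (Yset G Vp i)) ∪ Yset G Vp i
  else Cset' G Vp i ∪ Yset G Vp i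

/-- The induced subgraph on `W` with all edges inside `Y` deleted. -/
def inducedMinusY (G : SimpleGraph V) (W Y : Set V) : SimpleGraph ↥W where
  Adj a b := G.Adj a b ∧ ¬((a : V) ∈ Y ∧ (b : V) ∈ Y)
  symm := by
    constructor
    intro a b h
    exact ⟨h.1.symm, fun hc => h.2 ⟨hc.2, hc.1⟩⟩
  loopless := by
    constructor
    intro a h
    exact G.loopless.irrefl a h.1

/-- The split graph `G_i = G[W_i] − E(G[Y_i])`. -/
noncomputable def Gsplit (G : SimpleGraph V) {t : ℕ} (Vp : Fin (t+1) → Set V)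
    (i : Fin (t+1)) : SimpleGraph ↥(Wset G Vp i) :=
  inducedMinusY G (Wset G Vp i) (Yset G Vp i)

/-!
A simplicial vertex is never an interior vertex of an induced path, since its two path-neighbours
are non-adjacent. In a starlike graph every non-simplicial vertex lies in the clique `V_0`. So for
`v ∈ S` it suffices to exhibit an m-convex set containing `S − {v}` but not `v`: if `v` is
simplicial take `V − {v}`; otherwise remove `v` together with its simplicial neighbours, which by
hypothesis are not in `S`. An induced path with ends in this set could only pass through `v` as an
interior vertex, and then its neighbours on the path are non-simplicial, hence both in `V_0` and
adjacent, which is impossible.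
-/

variable {G : SimpleGraph V}

lemma IsInducedPath.not_adj_getVert {a b : V} {p : G.Walk a b} (hp : IsInducedPath G p)
    {i j : ℕ} (hij : i + 1 < j) (hj : j ≤ p.length) : ¬ G.Adj (p.getVert i) (p.getVert j) := by
  have hlen := p.length_support
  have := hp.2 i j (by omega) (by omega) hij
  simpa only [List.get_eq_getElem, Walk.support_getElem_eq_getVert] using this

lemma IsInducedPath.exists_adj_adj_not_adj {a b w : V} {p : G.Walk a b}
    (hp : IsInducedPath G p) (hw : w ∈ p.support) (hwa : w ≠ a) (hwb : w ≠ b) :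
    ∃ x ∈ p.support, ∃ y ∈ p.support, G.Adj w x ∧ G.Adj w y ∧ x ≠ y ∧ ¬ G.Adj x y := by
  obtain ⟨k, rfl, hk⟩ := Walk.mem_support_iff_exists_getVert.mp hw
  have hk0 : k ≠ 0 := by rintro rfl; exact hwa p.getVert_zero
  have hkl : k ≠ p.length := by rintro rfl; exact hwb p.getVert_length
  refine ⟨p.getVert (k - 1), p.getVert_mem_support _, p.getVert (k + 1),
    p.getVert_mem_support _, ?_, p.adj_getVert_succ (by omega), ?_,
    hp.not_adj_getVert (by omega) (by omega)⟩
  · simpa only [Nat.sub_add_cancel (Nat.pos_of_ne_zero hk0)] using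
      (p.adj_getVert_succ (i := k - 1) (by omega)).symm
  · intro hxy
    have := hp.1.getVert_injOn (show k - 1 ≤ p.length by omega)
      (show k + 1 ≤ p.length by omega) hxy
    omega

lemma IsInducedPath.not_isSimplicial {a b w : V} {p : G.Walk a b} (hp : IsInducedPath G p)
    (hw : w ∈ p.support) (hwa : w ≠ a) (hwb : w ≠ b) : ¬ IsSimplicial G w := by
  intro hsimp
  obtain ⟨x, -, y, -, hwx, hwy, hxy, hnxy⟩ := hp.exists_adj_adj_not_adj hw hwa hwb
  exact hnxy (hsimp x (Set.mem_insert_of_mem _ hwx) y (Set.mem_insert_of_mem _ hwy) hxy)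

lemma monoHull_subset {S T : Set V} (hST : S ⊆ T) (hT : MonoConvex G T) :
    monoHull G S ⊆ T :=
  Set.sInter_subset_of_mem ⟨hST, hT⟩

lemma monoConvex_of_compl_subset_simplicialSet {T : Set V} (hT : Tᶜ ⊆ simplicialSet G) :
    MonoConvex G T := by
  intro a b ha hb p hp w hw
  by_contra hwT
  exact hp.not_isSimplicial hw (by rintro rfl; exact hwT ha) (by rintro rfl; exact hwT hb)
    (hT hwT)

lemma monoConvex_compl_insert_simplicial_neighborSet (hK : G.IsClique (simplicialSet G)ᶜ)
    (v : V) : MonoConvex G ({v} ∪ G.neighborSet v ∩ simplicialSet G)ᶜ := by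
  intro a b ha hb p hp w hw
  by_contra hwT
  have interior : ∀ z ∈ p.support, z ∉ ({v} ∪ G.neighborSet v ∩ simplicialSet G)ᶜ →
      z ≠ a ∧ z ≠ b := fun z _ hz ↦ ⟨by rintro rfl; exact hz ha, by rintro rfl; exact hz hb⟩
  obtain ⟨hwa, hwb⟩ := interior w hw hwT
  have hwv : w = v := by
    rcases not_not.mp hwT with hwv | ⟨-, hwZ⟩
    · exact hwv
    · exact absurd hwZ (hp.not_isSimplicial hw hwa hwb)
  subst hwv
  obtain ⟨x, hx, y, hy, hwx, hwy, hxy, hnxy⟩ := hp.exists_adj_adj_not_adj hw hwa hwb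
  have not_simplicial : ∀ z ∈ p.support, G.Adj w z → z ∉ simplicialSet G := by
    intro z hz hwz hzZ
    obtain ⟨hza, hzb⟩ := interior z hz (fun hzT ↦ hzT (Or.inr ⟨hwz, hzZ⟩))
    exact hp.not_isSimplicial hz hza hzb hzZ
  exact hnxy (hK (not_simplicial x hx hwx) (not_simplicial y hy hwy) hxy)

namespace IsStarlikePartition

variable {t : ℕ} {Vp : Fin (t+1) → Set V}

lemma adj_of_mem_closedNbhd_diff (hstar : IsStarlikePartition G t Vp) {i : Fin (t+1)}
    (hi : i ≠ 0) {u x y : V} (hu : u ∈ Vp i) (hx : x ∈ Vp i) (hy : y ∈ closedNbhd G u \ Vp i) :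
    G.Adj x y := by
  rw [hstar.nbhd_eq i hi u hu x hx] at hy
  rcases hy with ⟨rfl | hxy, hyi⟩
  · exact absurd hx hyi
  · exact hxy

lemma isSimplicial_of_mem (hstar : IsStarlikePartition G t Vp) {i : Fin (t+1)} (hi : i ≠ 0)
    {u : V} (hu : u ∈ Vp i) : IsSimplicial G u := by
  intro x hx y hy hxy
  by_cases hxi : x ∈ Vp i <;> by_cases hyi : y ∈ Vp i
  · exact hstar.cliques i hxi hyi hxy
  · exact hstar.adj_of_mem_closedNbhd_diff hi hu hxi ⟨hy, hyi⟩
  · exact (hstar.adj_of_mem_closedNbhd_diff hi hu hyi ⟨hx, hxi⟩).symm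
  · exact hstar.cliques 0 (hstar.nbhd_sub i hi u hu ⟨hx, hxi⟩)
      (hstar.nbhd_sub i hi u hu ⟨hy, hyi⟩) hxy

lemma compl_simplicialSet_subset (hstar : IsStarlikePartition G t Vp) :
    (simplicialSet G)ᶜ ⊆ Vp 0 := by
  intro x hx
  obtain ⟨i, hi⟩ := hstar.covers x
  by_cases hi0 : i = 0
  · exact hi0 ▸ hi
  · exact absurd (hstar.isSimplicial_of_mem hi0 hi) hx

lemma isClique_compl_simplicialSet (hstar : IsStarlikePartition G t Vp) :
    G.IsClique (simplicialSet G)ᶜ :=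
  (hstar.cliques 0).subset hstar.compl_simplicialSet_subset

end IsStarlikePartition

theorem statement1_general (G : SimpleGraph V) (t : ℕ) (Vp : Fin (t+1) → Set V)
    (hstar : IsStarlikePartition G t Vp) (S : Set V)
    (h : ∀ u ∈ S \ simplicialSet G, ∀ v ∈ S ∩ simplicialSet G, ¬ G.Adj u v) :
    MConvexIndep G S := by
  intro v hv hv_hull
  by_cases hvZ : v ∈ simplicialSet G
  · have hconv : MonoConvex G ({v}ᶜ : Set V) :=
      monoConvex_of_compl_subset_simplicialSet (by simpa using hvZ)
    exact monoHull_subset (fun u hu ↦ hu.2) hconv hv_hull rfl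
  · have hsub : S \ {v} ⊆ ({v} ∪ G.neighborSet v ∩ simplicialSet G)ᶜ := by
      rintro u ⟨huS, huv⟩ (rfl | ⟨hvu, huZ⟩)
      · exact huv rfl
      · exact h v ⟨hv, hvZ⟩ u ⟨huS, huZ⟩ hvu
    have hconv := monoConvex_compl_insert_simplicial_neighborSet
      hstar.isClique_compl_simplicialSet v
    exact monoHull_subset hsub hconv hv_hull (Or.inl rfl)

/-- in a starlike graph, if no vertex of `S − Z` is adjacent to a
vertex of `S ∩ Z`, then `S` is m-convexly independent. -/
theorem statement1 [Fintype V] (G : SimpleGraph V) (t : ℕ) (Vp : Fin (t+1) → Set V)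
    (hstar : IsStarlikePartition G t Vp) (S : Set V)
    (h : ∀ u ∈ S \ simplicialSet G, ∀ v ∈ S ∩ simplicialSet G, ¬ G.Adj u v) :
    MConvexIndep G S :=
  statement1_general G t Vp hstar S h
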